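/- The influence function of the Multilayer Linear Threshold Model is not submodular: there exists a multilayer network M with actor set A, a node threshold μ ∈ [0,1], a protocol threshold δ ∈ (0,1], sets S' ⊆ S ⊆ A and an actor a ∈ A with a ∉ S, such that σ(S' ∪ {a}) − σ(S') < σ(S ∪ {a}) − σ(S). -/
import Mathlib


open Finset

/-- A multilayer network `M = (A, L, V, E)`: a finite nonempty set of actors `A`,
a finite nonempty set of layers `L`, a set of nodes `V ⊆ A × L`, and an unweighted,
undirected, loopless adjacency between nodes lying in the same layer.
Every actor is represented in at least one layer. -/
structure MLN (A L : Type) [Fintype A] [Fintype L] [DecidableEq A] [DecidableEq L] where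
  V : Finset (A × L)
  Adj : (A × L) → (A × L) → Bool
  adj_symm : ∀ u v, Adj u v = Adj v u
  adj_irrefl : ∀ v, Adj v v = false
  adj_mem : ∀ u v, Adj u v = true → u ∈ V ∧ v ∈ V
  adj_layer : ∀ u v, Adj u v = true → u.2 = v.2
  actors_nonempty : Nonempty A
  layers_nonempty : Nonempty L
  actor_repr : ∀ a : A, ∃ l : L, (a, l) ∈ V

namespace MLN

variable {A L : Type} [Fintype A] [Fintype L] [DecidableEq A] [DecidableEq L]

/-- The set of neighbours of a node. -/
def nbrs (M : MLN A L) (v : A × L) : Finset (A × L) :=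
  Finset.univ.filter (fun u => M.Adj v u)

/-- The degree of a node. -/
def deg (M : MLN A L) (v : A × L) : ℕ := (M.nbrs v).card

/-- The input `y_v(S)` received by a node `v` from the active actor set `S`:
`1` if `v` has positive degree and the fraction of its neighbours whose actors lie in
`S` strictly exceeds `μ`, and `0` otherwise. -/
def input (M : MLN A L) (μ : ℚ) (S : Finset A) (v : A × L) : ℚ :=
  if 0 < M.deg v ∧ μ < (((M.nbrs v).filter (fun u => u.1 ∈ S)).card : ℚ) / (M.deg v : ℚ)
  then 1 else 0

/-- `K(a)`: the set of layers in which actor `a` is represented. -/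
def layersOf (M : MLN A L) (a : A) : Finset L :=
  Finset.univ.filter (fun l => (a, l) ∈ M.V)

/-- The one-step update map `F_{μ,δ}` of the Multilayer Linear Threshold Model:
`F_{μ,δ}(S) = S ∪ {a ∈ A : (1/|K(a)|) ∑_{k ∈ K(a)} y_{(a,k)}(S) ≥ δ}`. -/
def update (M : MLN A L) (μ δ : ℚ) (S : Finset A) : Finset A :=
  S ∪ Finset.univ.filter (fun a =>
    δ ≤ (∑ k ∈ M.layersOf a, M.input μ S (a, k)) / ((M.layersOf a).card : ℚ))

/-- The trajectory of active actor sets: `S_0 = S0`, `S_{t+1} = F_{μ,δ}(S_t)`. -/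
def traj (M : MLN A L) (μ δ : ℚ) (S0 : Finset A) : ℕ → Finset A
  | 0 => S0
  | t + 1 => M.update μ δ (M.traj μ δ S0 t)

/-- The influence `σ(S0)`: the number of actors active at the steady state,
which is reached after at most `|A|` steps. -/
def influence (M : MLN A L) (μ δ : ℚ) (S0 : Finset A) : ℕ :=
  (M.traj μ δ S0 (Fintype.card A)).card

end MLN

def exMLN : MLN (Fin 3) (Fin 1) where
  V := Finset.univ
  Adj := fun u v => decide ((u.1 = 0 ∧ v.1 = 2) ∨ (u.1 = 2 ∧ v.1 = 0) ∨
    (u.1 = 1 ∧ v.1 = 2) ∨ (u.1 = 2 ∧ v.1 = 1))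
  adj_symm := by decide
  adj_irrefl := by decide
  adj_mem := by decide
  adj_layer := by decide
  actors_nonempty := ⟨0⟩
  layers_nonempty := ⟨0⟩
  actor_repr := by decide

lemma exMLN_input_eq (S : Finset (Fin 3)) (v : Fin 3 × Fin 1) (d k : ℕ)
    (hd : exMLN.deg v = d)
    (hk : ((exMLN.nbrs v).filter (fun u => u.1 ∈ S)).card = k) :
    exMLN.input (1/2) S v = if 0 < d ∧ (1:ℚ)/2 < (k : ℚ) / (d : ℚ) then 1 else 0 := by
  rw [MLN.input, hd, hk]

lemma exMLN_layersOf (a : Fin 3) : exMLN.layersOf a = {0} := by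
  fin_cases a <;> decide

lemma exMLN_update_eq (S T : Finset (Fin 3))
    (h : ∀ x : Fin 3, (x ∈ S ∨ (1:ℚ) ≤ exMLN.input (1/2) S (x, 0)) ↔ x ∈ T) :
    exMLN.update (1/2) 1 S = T := by
  ext x
  rw [MLN.update, Finset.mem_union, Finset.mem_filter]
  rw [exMLN_layersOf x, Finset.sum_singleton]
  simp only [Finset.mem_univ, true_and, Finset.card_singleton, Nat.cast_one, div_one]
  exact h x

lemma exMLN_upd_empty : exMLN.update (1/2) 1 (∅ : Finset (Fin 3)) = ∅ := by
  apply exMLN_update_eq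
  intro x
  fin_cases x
  · rw [exMLN_input_eq _ _ 1 0 (by decide) (by decide)]; norm_num
  · rw [exMLN_input_eq _ _ 1 0 (by decide) (by decide)]; norm_num
  · rw [exMLN_input_eq _ _ 2 0 (by decide) (by decide)]; norm_num

lemma exMLN_upd_zero : exMLN.update (1/2) 1 ({0} : Finset (Fin 3)) = {0} := by
  apply exMLN_update_eq
  intro x
  fin_cases x
  · rw [exMLN_input_eq _ _ 1 0 (by decide) (by decide)]; norm_num
  · rw [exMLN_input_eq _ _ 1 0 (by decide) (by decide)]; norm_num
  · rw [exMLN_input_eq _ _ 2 1 (by decide) (by decide)]; norm_num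

lemma exMLN_upd_one : exMLN.update (1/2) 1 ({1} : Finset (Fin 3)) = {1} := by
  apply exMLN_update_eq
  intro x
  fin_cases x
  · rw [exMLN_input_eq _ _ 1 0 (by decide) (by decide)]; norm_num
  · rw [exMLN_input_eq _ _ 1 0 (by decide) (by decide)]; norm_num
  · rw [exMLN_input_eq _ _ 2 1 (by decide) (by decide)]; norm_num

lemma exMLN_upd_both : exMLN.update (1/2) 1 ({1, 0} : Finset (Fin 3)) = {0, 1, 2} := by
  apply exMLN_update_eq
  intro x
  fin_cases x
  · rw [exMLN_input_eq _ _ 1 0 (by decide) (by decide)]; norm_num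
  · rw [exMLN_input_eq _ _ 1 0 (by decide) (by decide)]; norm_num
  · rw [exMLN_input_eq _ _ 2 2 (by decide) (by decide)]; norm_num; decide

lemma exMLN_upd_all : exMLN.update (1/2) 1 ({0, 1, 2} : Finset (Fin 3)) = {0, 1, 2} := by
  apply exMLN_update_eq
  intro x
  fin_cases x <;> exact ⟨fun _ => by decide, fun _ => Or.inl (by decide)⟩

lemma exMLN_card : Fintype.card (Fin 3) = 3 := by simp

lemma exMLN_inf_empty : exMLN.influence (1/2) 1 (∅ : Finset (Fin 3)) = 0 := by
  rw [MLN.influence, exMLN_card]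
  show (exMLN.update (1/2) 1 (exMLN.update (1/2) 1 (exMLN.update (1/2) 1 ∅))).card = 0
  rw [exMLN_upd_empty, exMLN_upd_empty, exMLN_upd_empty]
  rfl

lemma exMLN_inf_zero : exMLN.influence (1/2) 1 ({0} : Finset (Fin 3)) = 1 := by
  rw [MLN.influence, exMLN_card]
  show (exMLN.update (1/2) 1 (exMLN.update (1/2) 1 (exMLN.update (1/2) 1 {0}))).card = 1
  rw [exMLN_upd_zero, exMLN_upd_zero, exMLN_upd_zero]
  rfl

lemma exMLN_inf_one : exMLN.influence (1/2) 1 ({1} : Finset (Fin 3)) = 1 := by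
  rw [MLN.influence, exMLN_card]
  show (exMLN.update (1/2) 1 (exMLN.update (1/2) 1 (exMLN.update (1/2) 1 {1}))).card = 1
  rw [exMLN_upd_one, exMLN_upd_one, exMLN_upd_one]
  rfl

lemma exMLN_inf_both : exMLN.influence (1/2) 1 ({1, 0} : Finset (Fin 3)) = 3 := by
  rw [MLN.influence, exMLN_card]
  show (exMLN.update (1/2) 1 (exMLN.update (1/2) 1 (exMLN.update (1/2) 1 {1, 0}))).card = 3
  rw [exMLN_upd_both, exMLN_upd_all, exMLN_upd_all]
  rfl

/-- The influence function of the MLTM is not submodular: there exists a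
multilayer network `M` with actor set `A`, a node threshold `μ ∈ [0,1]`, a protocol
threshold `δ ∈ (0,1]`, sets `S' ⊆ S ⊆ A` and an actor `a ∈ A` with `a ∉ S`, such
that `σ(S' ∪ {a}) − σ(S') < σ(S ∪ {a}) − σ(S)`. -/
theorem mltm_influence_not_submodular :
    ∃ (nA nL : ℕ) (M : MLN (Fin nA) (Fin nL)) (μ δ : ℚ)
      (S' S : Finset (Fin nA)) (a : Fin nA),
      0 ≤ μ ∧ μ ≤ 1 ∧ 0 < δ ∧ δ ≤ 1 ∧ S' ⊆ S ∧ a ∉ S ∧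
      (M.influence μ δ (S' ∪ {a}) : ℤ) - (M.influence μ δ S' : ℤ) <
        (M.influence μ δ (S ∪ {a}) : ℤ) - (M.influence μ δ S : ℤ) := by
  refine ⟨3, 1, exMLN, 1/2, 1, ∅, {1}, 0, by norm_num, by norm_num, by norm_num, by norm_num,
    by simp, by decide, ?_⟩
  have he : (∅ : Finset (Fin 3)) ∪ {0} = {0} := by decide
  have hb : ({1} : Finset (Fin 3)) ∪ {0} = {1, 0} := by decide
  rw [he, hb, exMLN_inf_empty, exMLN_inf_zero, exMLN_inf_one, exMLN_inf_both]
  norm_num
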